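/- Let M be the 14×14 symmetric matrix indexed by {y, x, A₁, B₁, C₁, A₂, B₂, C₂, A₃, B₃, C₃, A₄, B₄, C₄} with diagonal entries 1 and off-diagonal entries: M(Aᵢ, Bᵢ) = −√3/2 and M(Bᵢ, Cᵢ) = −1/2 for i = 1,2,3,4, M(y, Aᵢ) = −1/2 and M(x, Cᵢ) = −1/2 for i = 1,2,3,4, and all other off-diagonal entries 0. Then M has rank 10, and its quadratic form has exactly one negative eigenvalue and nine positive eigenvalues (i.e., signature (9,1) with 4-dimensional kernel). -/

import Mathlib

/-- Off-diagonal entry (for indices i < j) of the Gram matrix of P⋆: nodes are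
indexed y = 0, x = 1, and the four chains Aᵢ–Bᵢ–Cᵢ occupy indices
(2+3i, 3+3i, 4+3i) for i = 0,1,2,3.  So A-nodes are ≡ 2, B-nodes ≡ 0 and
C-nodes ≡ 1 (mod 3) among indices ≥ 2. -/
noncomputable def pstarEntry (i j : ℕ) : ℝ :=
  if 2 ≤ i ∧ j = i + 1 ∧ i % 3 = 2 then -(Real.sqrt 3) / 2       -- M(Aᵢ,Bᵢ)
  else if 2 ≤ i ∧ j = i + 1 ∧ i % 3 = 0 then -(1/2)              -- M(Bᵢ,Cᵢ)
  else if i = 0 ∧ 2 ≤ j ∧ j % 3 = 2 then -(1/2)                  -- M(y,Aᵢ)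
  else if i = 1 ∧ 2 ≤ j ∧ j % 3 = 1 then -(1/2)                  -- M(x,Cᵢ)
  else 0

/-- The Gram matrix of the Coxeter polyhedron P⋆ ⊂ ℍ⁹. -/
noncomputable def PstarGram : Matrix (Fin 14) (Fin 14) ℝ := fun i j =>
  if i = j then 1
  else if (i : ℕ) < (j : ℕ) then pstarEntry i j else pstarEntry j i

/-!
Write `y = v 0`, `x = v 1` and `(a, b, c)` for the coordinates of a chain `A–B–C`. Completing the
square in each chain gives
`a² + b² + c² - √3 ab - bc - ya - xc + y²/4 + x²/4 = (a - √3 b/2 - y/2)² + (c - b/2 - x/2)² - bℓ/2`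
with `ℓ = √3 y + x`, so over the four chains the quadratic form of the Gram matrix is eight squares
plus `-βℓ/2 = ((β - ℓ)² - (β + ℓ)²)/8`, where `β` is the sum of the four `b`'s. Completed by four
coordinates to a basis of the dual space, these ten linear forms exhibit the form as a weighted sum
of squares with nine positive weights and one negative one, and Sylvester's law of inertia
transfers these counts to the eigenvalues.
-/

open Matrix QuadraticMap QuadraticForm Function Finset

section Inertia

variable {n : Type*} [Fintype n] [DecidableEq n]

theorem Matrix.equivalent_weightedSumSquares_of_injective {K : Type*} [Field K]
    {A : Matrix n n K} {w : n → K} (L : (n → K) →ₗ[K] n → K) (hL : Injective L)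
    (hA : ∀ v, v ⬝ᵥ (A *ᵥ v) = ∑ i, w i * L v i ^ 2) :
    A.toQuadraticForm'.Equivalent (weightedSumSquares K w) :=
  ⟨{ LinearEquiv.ofInjectiveEndo L hL with
      map_app' := fun v => by
        simp [weightedSumSquares_apply, Matrix.toQuadraticForm', toLinearMap₂'_apply', hA,
          _root_.sq] }⟩

namespace Matrix.IsHermitian

variable {A : Matrix n n ℝ} (hA : A.IsHermitian)

theorem dotProduct_mulVec_eq_sum_eigenvalues (v : n → ℝ) :
    v ⬝ᵥ (A *ᵥ v) =
      ∑ i, hA.eigenvalues i * ((hA.eigenvectorUnitary : Matrix n n ℝ)ᵀ *ᵥ v) i ^ 2 := by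
  set U : Matrix n n ℝ := ↑hA.eigenvectorUnitary
  have hU : star U = Uᵀ := by rw [star_eq_conjTranspose, conjTranspose_eq_transpose_of_trivial]
  conv_lhs => rw [hA.spectral_theorem, Unitary.conjStarAlgAut_apply]
  rw [hU, ← mulVec_mulVec, ← mulVec_mulVec, dotProduct_mulVec, ← mulVec_transpose]
  simp [dotProduct, mulVec_diagonal, _root_.sq, mul_left_comm, U]

theorem equivalent_weightedSumSquares_eigenvalues :
    A.toQuadraticForm'.Equivalent (weightedSumSquares ℝ hA.eigenvalues) := by
  set U : Matrix n n ℝ := ↑hA.eigenvectorUnitary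
  have hUU : U * Uᵀ = 1 := by
    rw [← conjTranspose_eq_transpose_of_trivial, ← star_eq_conjTranspose]
    exact mem_unitaryGroup_iff.mp hA.eigenvectorUnitary.2
  refine equivalent_weightedSumSquares_of_injective Uᵀ.mulVecLin (fun v w h => ?_)
    hA.dotProduct_mulVec_eq_sum_eigenvalues
  simpa only [mulVecLin_apply, mulVec_mulVec, hUU, one_mulVec] using congrArg (U *ᵥ ·) h

variable {w : n → ℝ}

theorem card_neg_eigenvalues_eq (hw : A.toQuadraticForm'.Equivalent (weightedSumSquares ℝ w)) :
    #{i | hA.eigenvalues i < 0} = #{i | w i < 0} := by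
  have h := (sigNeg_of_equiv_weightedSumSquares
    hA.equivalent_weightedSumSquares_eigenvalues).symm.trans (sigNeg_of_equiv_weightedSumSquares hw)
  simpa [Set.ncard_eq_toFinset_card'] using h

theorem card_pos_eigenvalues_eq (hw : A.toQuadraticForm'.Equivalent (weightedSumSquares ℝ w)) :
    #{i | 0 < hA.eigenvalues i} = #{i | 0 < w i} := by
  have h := (sigPos_of_equiv_weightedSumSquares
    hA.equivalent_weightedSumSquares_eigenvalues).symm.trans (sigPos_of_equiv_weightedSumSquares hw)
  simpa [Set.ncard_eq_toFinset_card'] using h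

end Matrix.IsHermitian

end Inertia

theorem Fintype.card_ne_zero_eq_card_neg_add_card_pos {n α : Type*} [Fintype n] [LinearOrder α]
    [Zero α] (f : n → α) :
    Fintype.card {i // f i ≠ 0} = #{i | f i < 0} + #{i | 0 < f i} := by
  classical
  rw [Fintype.card_subtype, ← Finset.card_union_of_disjoint, ← Finset.filter_or]
  · simp_rw [ne_iff_lt_or_gt]
  · exact Finset.disjoint_filter.2 fun i _ h₁ h₂ => (h₁.trans h₂).false

theorem pstarGram_isHermitian : PstarGram.IsHermitian := by
  ext i j
  simp only [conjTranspose_apply, star_trivial, PstarGram, eq_comm (a := j)]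
  split_ifs <;> first | rfl | omega

theorem dotProduct_pstarGram_mulVec (v : Fin 14 → ℝ) :
    v ⬝ᵥ (PstarGram *ᵥ v) = ∑ i, v i ^ 2
      - √3 * (v 2 * v 3 + v 5 * v 6 + v 8 * v 9 + v 11 * v 12)
      - (v 3 * v 4 + v 6 * v 7 + v 9 * v 10 + v 12 * v 13)
      - v 0 * (v 2 + v 5 + v 8 + v 11) - v 1 * (v 4 + v 7 + v 10 + v 13) := by
  simp +decide only [dotProduct, mulVec, Fin.sum_univ_succ, Fin.sum_univ_zero, PstarGram,
    pstarEntry, Fin.succ_zero_eq_one, Fin.succ_one_eq_two, Fin.reduceSucc, ↓reduceIte]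
  ring

noncomputable def pstarCoords : (Fin 14 → ℝ) →ₗ[ℝ] Fin 14 → ℝ where
  toFun v := ![v 2 - √3 / 2 * v 3 - v 0 / 2, v 5 - √3 / 2 * v 6 - v 0 / 2,
    v 8 - √3 / 2 * v 9 - v 0 / 2, v 11 - √3 / 2 * v 12 - v 0 / 2,
    v 4 - v 3 / 2 - v 1 / 2, v 7 - v 6 / 2 - v 1 / 2,
    v 10 - v 9 / 2 - v 1 / 2, v 13 - v 12 / 2 - v 1 / 2,
    (v 3 + v 6 + v 9 + v 12) - (√3 * v 0 + v 1), (v 3 + v 6 + v 9 + v 12) + (√3 * v 0 + v 1),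
    v 0, v 6, v 9, v 12]
  map_add' v w := by
    ext k
    fin_cases k <;>
      simp only [Pi.add_apply, Fin.reduceFinMk, Fin.zero_eta, Fin.mk_one, Matrix.cons_val] <;> ring
  map_smul' c v := by
    ext k
    fin_cases k <;>
      simp only [Pi.smul_apply, smul_eq_mul, Fin.reduceFinMk, Fin.zero_eta, Fin.mk_one,
        Matrix.cons_val, RingHom.id_apply] <;> ring

theorem pstarCoords_injective : Injective pstarCoords := by
  rw [← LinearMap.ker_eq_bot, LinearMap.ker_eq_bot']
  intro v hv
  have e : ∀ k, pstarCoords v k = 0 := congrFun hv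
  simp only [pstarCoords, LinearMap.coe_mk, AddHom.coe_mk, Fin.forall_fin_succ, cons_val_zero,
    cons_val_succ, cons_val_fin_one, forall_const] at e
  obtain ⟨p₁, p₂, p₃, p₄, q₁, q₂, q₃, q₄, hβ_sub_ℓ, hβ_add_ℓ, y₀, b₂, b₃, b₄⟩ := e
  rw [y₀, b₂, b₃, b₄] at hβ_sub_ℓ hβ_add_ℓ
  have b₁ : v 3 = 0 := by linarith
  have x₀ : v 1 = 0 := by linarith
  simp only [y₀, x₀, b₁, b₂, b₃, b₄, mul_zero, zero_div, sub_zero] at p₁ p₂ p₃ p₄ q₁ q₂ q₃ q₄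
  ext k
  fin_cases k <;> assumption

noncomputable def pstarWeights : Fin 14 → ℝ := ![1, 1, 1, 1, 1, 1, 1, 1, 1 / 8, -1 / 8, 0, 0, 0, 0]

theorem dotProduct_pstarGram_mulVec_eq_sum_sq (v : Fin 14 → ℝ) :
    v ⬝ᵥ (PstarGram *ᵥ v) = ∑ k, pstarWeights k * pstarCoords v k ^ 2 := by
  rw [dotProduct_pstarGram_mulVec]
  simp only [Fin.sum_univ_succ, Fin.succ_zero_eq_one, Fin.succ_one_eq_two, Fin.reduceSucc,
    univ_unique, Fin.default_eq_zero, sum_singleton, pstarWeights, pstarCoords, LinearMap.coe_mk,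
    AddHom.coe_mk, cons_val_zero, cons_val_succ, cons_val_fin_one]
  linear_combination -(v 3 ^ 2 + v 6 ^ 2 + v 9 ^ 2 + v 12 ^ 2) / 4 *
    Real.sq_sqrt (show (0 : ℝ) ≤ 3 by norm_num)

theorem card_neg_pstarWeights : #{k | pstarWeights k < 0} = 1 := by
  have h : ({k | pstarWeights k < 0} : Finset (Fin 14)) = {9} := by
    ext k; fin_cases k <;> norm_num [pstarWeights, Fin.ext_iff]
  rw [h]
  rfl

theorem card_pos_pstarWeights : #{k | 0 < pstarWeights k} = 9 := by
  have h : ({k | 0 < pstarWeights k} : Finset (Fin 14)) = Iio 9 := by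
    ext k; fin_cases k <;> norm_num [pstarWeights, Fin.lt_def]
  rw [h]
  rfl

/-- The Gram matrix of P⋆ has rank 10 and signature (9,1): exactly one negative
eigenvalue and nine positive eigenvalues (hence a 4-dimensional kernel). -/
theorem stmt_17 :
    PstarGram.rank = 10 ∧
    ∃ hM : PstarGram.IsHermitian,
      (Finset.univ.filter fun i => hM.eigenvalues i < 0).card = 1 ∧
      (Finset.univ.filter fun i => 0 < hM.eigenvalues i).card = 9 := by
  have hM := pstarGram_isHermitian
  have hw := equivalent_weightedSumSquares_of_injective pstarCoords pstarCoords_injective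
    dotProduct_pstarGram_mulVec_eq_sum_sq
  have hneg := (hM.card_neg_eigenvalues_eq hw).trans card_neg_pstarWeights
  have hpos := (hM.card_pos_eigenvalues_eq hw).trans card_pos_pstarWeights
  refine ⟨?_, hM, hneg, hpos⟩
  rw [hM.rank_eq_card_non_zero_eigs, Fintype.card_ne_zero_eq_card_neg_add_card_pos, hneg, hpos]
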